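/- In the three-point loop algebra L = sl2 ⊗ K[T,T^{-1},(T-1)^{-1}], define for m ≥ 1: â_m = -X⊗U_{m-2}(1-2T) + Y⊗T·U_{m-1}(1-2T) + Z⊗(T-1)·U_{m-1}(1-2T), â_{1-m} = X⊗U_{m-1}(1-2T) - Y⊗T·U_{m-2}(1-2T) - Z⊗(T-1)·U_{m-2}(1-2T), and ĝ_m = -X⊗U_{m-1}(1-2T) - Y⊗T·U_{m-1}(1-2T) + Z⊗(T-1)·U_{m-1}(1-2T), where U_n are Chebyshev polynomials of the second kind (U_{-1}=0). Then these elements satisfy the Onsager relations: [â_l, â_m] = 2ĝ_{l-m} for l > m, [ĝ_l, â_m] = â_{m+l} - â_{m-l}, and [ĝ_l, ĝ_m] = 0. -/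

import Mathlib

set_option synthInstance.maxHeartbeats 1000000
set_option maxHeartbeats 1000000

namespace TetPaper
variable {K : Type*} [Field K]

/-- Auxiliary bracket for `sl2` in the `X,Y,Z` coordinates, where
`[X,Y] = 2X+2Y`, `[Y,Z] = 2Y+2Z`, `[Z,X] = 2Z+2X`. -/
def sl2xb (u v : Fin 3 → K) : Fin 3 → K :=
  ![2*(u 0 * v 1 - u 1 * v 0) + 2*(u 2 * v 0 - u 0 * v 2),
    2*(u 0 * v 1 - u 1 * v 0) + 2*(u 1 * v 2 - u 2 * v 1),
    2*(u 2 * v 0 - u 0 * v 2) + 2*(u 1 * v 2 - u 2 * v 1)]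

lemma sl2xb_add_lie (x y z : Fin 3 → K) : sl2xb (x + y) z = sl2xb x z + sl2xb y z := by
  funext i; fin_cases i <;> simp [sl2xb] <;> ring

lemma sl2xb_lie_add (x y z : Fin 3 → K) : sl2xb x (y + z) = sl2xb x y + sl2xb x z := by
  funext i; fin_cases i <;> simp [sl2xb] <;> ring

lemma sl2xb_lie_self (x : Fin 3 → K) : sl2xb x x = 0 := by
  funext i; fin_cases i <;> simp [sl2xb, -mul_eq_zero] <;> ring

lemma sl2xb_leibniz (x y z : Fin 3 → K) :
    sl2xb x (sl2xb y z) = sl2xb (sl2xb x y) z + sl2xb y (sl2xb x z) := by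
  funext i; fin_cases i <;> simp [sl2xb] <;> ring

lemma sl2xb_smul (t : K) (x y : Fin 3 → K) : sl2xb x (t • y) = t • sl2xb x y := by
  funext i; fin_cases i <;> simp [sl2xb] <;> ring

end TetPaper

/-- The Lie algebra over `K` with basis `X, Y, Z` and brackets
`[X,Y] = 2X+2Y`, `[Y,Z] = 2Y+2Z`, `[Z,X] = 2Z+2X`. -/
def Sl2X (K : Type*) := Fin 3 → K

noncomputable instance {K : Type*} [Field K] : AddCommGroup (Sl2X K) :=
  inferInstanceAs (AddCommGroup (Fin 3 → K))

noncomputable instance {K : Type*} [Field K] : Module K (Sl2X K) :=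
  inferInstanceAs (Module K (Fin 3 → K))

noncomputable instance {K : Type*} [Field K] : LieRing (Sl2X K) where
  bracket u v := TetPaper.sl2xb u v
  add_lie x y z := TetPaper.sl2xb_add_lie x y z
  lie_add x y z := TetPaper.sl2xb_lie_add x y z
  lie_self x := TetPaper.sl2xb_lie_self x
  leibniz_lie x y z := TetPaper.sl2xb_leibniz x y z

noncomputable instance {K : Type*} [Field K] : LieAlgebra K (Sl2X K) where
  lie_smul t x y := TetPaper.sl2xb_smul t x y

namespace Sl2X
variable (K : Type*) [Field K]
/-- The basis vector `X`. -/
noncomputable def Xv : Sl2X K := (![1,0,0] : Fin 3 → K)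
/-- The basis vector `Y`. -/
noncomputable def Yv : Sl2X K := (![0,1,0] : Fin 3 → K)
/-- The basis vector `Z`. -/
noncomputable def Zv : Sl2X K := (![0,0,1] : Fin 3 → K)
end Sl2X
open scoped Polynomial

/-- The algebra `K[T, T⁻¹, (T-1)⁻¹]`, realized as the subalgebra of the field of
rational functions generated by `T`, `T⁻¹` and `(T-1)⁻¹`. -/
noncomputable def Arat (K : Type*) [Field K] : Subalgebra K (RatFunc K) :=
  Algebra.adjoin K {RatFunc.X, RatFunc.X⁻¹, (RatFunc.X - 1)⁻¹}

/-- The element `T` of `Arat K`. -/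
noncomputable def tA (K : Type*) [Field K] : Arat K :=
  ⟨RatFunc.X, Algebra.subset_adjoin (by simp)⟩

/-- The element `T⁻¹` of `Arat K`. -/
noncomputable def tiA (K : Type*) [Field K] : Arat K :=
  ⟨RatFunc.X⁻¹, Algebra.subset_adjoin (by simp)⟩

/-- The element `T' = 1 - T⁻¹` of `Arat K`. -/
noncomputable def tpA (K : Type*) [Field K] : Arat K := 1 - tiA K

/-- The element `T'' = (1-T)⁻¹` of `Arat K`. -/
noncomputable def tppA (K : Type*) [Field K] : Arat K :=
  ⟨(1 - RatFunc.X)⁻¹, by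
    have h1 : (RatFunc.X - 1)⁻¹ ∈ Arat K := Algebra.subset_adjoin (by simp)
    have h2 : ((1 : RatFunc K) - RatFunc.X)⁻¹ = -((RatFunc.X - 1)⁻¹) := by
      rw [← neg_sub, inv_neg]
    rw [h2]; exact neg_mem h1⟩

open scoped TensorProduct

/-- The three-point loop algebra `sl2 ⊗ K[T,T⁻¹,(T-1)⁻¹]`
(with the algebra factor written on the left). -/
noncomputable abbrev TPL (K : Type*) [Field K] := (Arat K) ⊗[K] Sl2X K

/-- The element `U_n(1 - 2T)` of `K[T,T⁻¹,(T-1)⁻¹]`, where `U_n` is the `n`-th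
Chebyshev polynomial of the second kind (indexed by `n : ℤ`, with `U_{-1} = 0`). -/
noncomputable def evU (K : Type*) [Field K] (n : ℤ) : Arat K :=
  Polynomial.aeval (1 - 2 * tA K) (Polynomial.Chebyshev.U K n)

/-!
Writing an element of `A ⊗ sl₂` as `a ⊗ X + b ⊗ Y + c ⊗ Z`, the bracket becomes an explicit
bilinear expression in the coordinates, so each Onsager relation amounts to three identities in
`A`. With `u n = U_n(1 - 2T)`, the coefficients of `â_n` and `ĝ_n` are `±u k` times `1`, `T` or
`T - 1`, and the identities reduce to two product formulas for Chebyshev polynomials,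
`U_l U_{m+1} - U_{l+1} U_m = U_{l-m-1}` and `2 T_m U_k = U_{k+m} + U_{k-m}`, each of which
propagates along the three-term recurrence. Nothing depends on `T` being transcendental: the
relations hold for any element `t` of any commutative `K`-algebra.
-/

open TensorProduct

namespace Polynomial.Chebyshev
variable (R : Type*) [CommRing R]

theorem T_mul_U (m k : ℤ) : 2 * T R m * U R k = U R (k + m) + U R (k - m) := by
  have hT : 2 * T R m = U R m - U R (m - 2) := by
    simpa using two_mul_T_eq_U_sub_U R (m - 2)
  induction k using Polynomial.Chebyshev.induct with
  | zero => simp [hT, U_neg, sub_eq_add_neg]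
  | one =>
    have h₁ := U_add_one R m
    have h₂ := U_sub_one R (m - 2)
    rw [show (1 : ℤ) - m = -(m - 1) by ring, U_neg, U_one]
    linear_combination (norm := ring_nf) 2 * X * hT - h₁ + h₂
  | add_two k ih1 ih2 =>
    have h₁ := U_add_two R (k + m)
    have h₂ := U_add_two R (k - m)
    have h₃ := U_add_two R k
    linear_combination (norm := ring_nf) 2 * T R m * h₃ - h₂ - h₁ + 2 * (X : R[X]) * ih1 - ih2
  | neg_add_one k ih1 ih2 =>
    have h₁ := U_sub_one R (-k + m)
    have h₂ := U_sub_one R (-k - m)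
    have h₃ := U_sub_one R (-k)
    linear_combination (norm := ring_nf) 2 * T R m * h₃ - h₂ - h₁ + 2 * (X : R[X]) * ih1 - ih2

theorem U_mul_U_add_one_sub_U_add_one_mul_U (l m : ℤ) :
    U R l * U R (m + 1) - U R (l + 1) * U R m = U R (l - m - 1) := by
  induction m using Polynomial.Chebyshev.induct with
  | zero =>
    simp only [zero_add, U_one, U_add_one R l, U_zero, mul_one, sub_zero]
    ring
  | one =>
    have h₁ := U_add_one R l
    have h₂ := U_sub_one R (l - 1)
    rw [show (1 : ℤ) + 1 = 2 by norm_num, U_two, U_one]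
    linear_combination (norm := ring_nf) -2 * X * h₁ - h₂
  | add_two k ih1 ih2 =>
    have h₁ := U_add_two R k
    have h₂ := U_add_two R (k + 1)
    have h₃ := U_sub_two R (l - k - 1)
    linear_combination (norm := ring_nf)
      U R l * h₂ - U R (l + 1) * h₁ - h₃ + 2 * (X : R[X]) * ih1 - ih2
  | neg_add_one k ih1 ih2 =>
    have h₁ := U_sub_one R (-k)
    have h₂ := U_sub_one R (-k + 1)
    have h₃ := U_add_one R (l + k - 1)
    linear_combination (norm := ring_nf)
      U R l * h₂ - U R (l + 1) * h₁ - h₃ + 2 * (X : R[X]) * ih1 - ih2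

end Polynomial.Chebyshev

namespace Sl2X
variable {K : Type*} [Field K] {A : Type*} [CommRing A] [Algebra K A]

lemma lie_Xv_Yv : ⁅Xv K, Yv K⁆ = (2 : K) • Xv K + (2 : K) • Yv K := by
  show TetPaper.sl2xb ![1, 0, 0] ![0, 1, 0] = (2 : K) • (![1, 0, 0] : Fin 3 → K) +
      (2 : K) • (![0, 1, 0] : Fin 3 → K)
  funext i; fin_cases i <;> simp [TetPaper.sl2xb]

lemma lie_Yv_Zv : ⁅Yv K, Zv K⁆ = (2 : K) • Yv K + (2 : K) • Zv K := by
  show TetPaper.sl2xb ![0, 1, 0] ![0, 0, 1] = (2 : K) • (![0, 1, 0] : Fin 3 → K) +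
      (2 : K) • (![0, 0, 1] : Fin 3 → K)
  funext i; fin_cases i <;> simp [TetPaper.sl2xb]

lemma lie_Zv_Xv : ⁅Zv K, Xv K⁆ = (2 : K) • Zv K + (2 : K) • Xv K := by
  show TetPaper.sl2xb ![0, 0, 1] ![1, 0, 0] = (2 : K) • (![0, 0, 1] : Fin 3 → K) +
      (2 : K) • (![1, 0, 0] : Fin 3 → K)
  funext i; fin_cases i <;> simp [TetPaper.sl2xb]

variable (K) in
noncomputable def ofCoords (a b c : A) : A ⊗[K] Sl2X K :=
  a ⊗ₜ Xv K + b ⊗ₜ Yv K + c ⊗ₜ Zv K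

lemma ofCoords_lie_ofCoords (a b c p q r : A) :
    ⁅ofCoords K a b c, ofCoords K p q r⁆ =
      (2 : K) • ofCoords K (a * q - b * p + (c * p - a * r)) (a * q - b * p + (b * r - c * q))
        (c * p - a * r + (b * r - c * q)) := by
  -- `add_lie` and `lie_add` do not fire under `simp` here: the addition coming from the `LieRing`
  -- instance is not reducibly that of the tensor product.
  have add_lie' (x y z : A ⊗[K] Sl2X K) : ⁅x + y, z⁆ = ⁅x, z⁆ + ⁅y, z⁆ := add_lie x y z
  have lie_add' (x y z : A ⊗[K] Sl2X K) : ⁅x, y + z⁆ = ⁅x, y⁆ + ⁅x, z⁆ := lie_add x y z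
  simp only [ofCoords, add_lie', lie_add', LieAlgebra.ExtendScalars.bracket_tmul, lie_self,
    tmul_zero, lie_Xv_Yv, lie_Yv_Zv, lie_Zv_Xv, ← lie_skew (Yv K) (Xv K),
    ← lie_skew (Zv K) (Yv K), ← lie_skew (Xv K) (Zv K), tmul_neg, tmul_smul, tmul_add, add_tmul,
    sub_tmul, smul_add, smul_sub]
  abel

lemma ofCoords_zero : ofCoords K (0 : A) 0 0 = 0 := by
  simp [ofCoords]

lemma ofCoords_sub (a b c p q r : A) :
    ofCoords K a b c - ofCoords K p q r = ofCoords K (a - p) (b - q) (c - r) := by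
  simp only [ofCoords, sub_tmul]; abel

lemma smul_ofCoords (k : K) (a b c : A) :
    k • ofCoords K a b c = ofCoords K (k • a) (k • b) (k • c) := by
  simp only [ofCoords, smul_add, smul_tmul']

end Sl2X

section Onsager
open Polynomial Polynomial.Chebyshev
variable (K : Type*) [Field K] {A : Type*} [CommRing A] [Algebra K A]

-- `â_n` and `ĝ_n` with `T` specialized to `t`; thanks to `U_{-n} = -U_{n-2}` the paper's two
-- formulas for `â` (for `n ≥ 1` and for `n ≤ 0`) are this single one.
noncomputable def onsagerA (t : A) (n : ℤ) : A ⊗[K] Sl2X K :=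
  Sl2X.ofCoords K (-(U A (n - 2)).eval (1 - 2 * t)) (t * (U A (n - 1)).eval (1 - 2 * t))
    ((t - 1) * (U A (n - 1)).eval (1 - 2 * t))

noncomputable def onsagerG (t : A) (n : ℤ) : A ⊗[K] Sl2X K :=
  Sl2X.ofCoords K (-(U A (n - 1)).eval (1 - 2 * t)) (-(t * (U A (n - 1)).eval (1 - 2 * t)))
    ((t - 1) * (U A (n - 1)).eval (1 - 2 * t))

variable {K}

theorem lie_onsagerA_onsagerA (t : A) (l m : ℤ) :
    ⁅onsagerA K t l, onsagerA K t m⁆ = (2 : K) • onsagerG K t (l - m) := by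
  have h := congrArg (eval (1 - 2 * t)) (U_mul_U_add_one_sub_U_add_one_mul_U A (l - 2) (m - 2))
  simp only [eval_mul, eval_sub] at h
  rw [onsagerA, onsagerA, onsagerG, Sl2X.ofCoords_lie_ofCoords]
  congr 2
  · linear_combination (norm := ring_nf) -h
  · linear_combination (norm := ring_nf) -t * h
  · linear_combination (norm := ring_nf) (t - 1) * h

theorem lie_onsagerG_onsagerA (t : A) (l m : ℤ) :
    ⁅onsagerG K t l, onsagerA K t m⁆ = onsagerA K t (m + l) - onsagerA K t (m - l) := by
  have hT₁ := congrArg (eval (1 - 2 * t)) (T_eq_U_sub_X_mul_U A (m - 1))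
  have hT₂ := congrArg (eval (1 - 2 * t)) (T_eq_X_mul_U_sub_U A (m - 2))
  have hTU₁ := congrArg (eval (1 - 2 * t)) (T_mul_U A (m - 1) (l - 1))
  have hTU₂ := congrArg (eval (1 - 2 * t)) (T_mul_U A m (l - 1))
  have hU₁ := congrArg (eval (1 - 2 * t)) (U_neg A (m - l))
  have hU₂ := congrArg (eval (1 - 2 * t)) (U_neg A (m - l + 1))
  simp only [eval_mul, eval_add, eval_sub, eval_neg, eval_X, eval_ofNat]
    at hT₁ hT₂ hTU₁ hTU₂ hU₁ hU₂
  rw [onsagerG, onsagerA, Sl2X.ofCoords_lie_ofCoords, onsagerA, onsagerA, Sl2X.ofCoords_sub,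
    Sl2X.smul_ofCoords]
  simp only [Algebra.smul_def, map_ofNat]
  congr 1
  · linear_combination (norm := ring_nf) 2 * (U A (l - 1)).eval (1 - 2 * t) * hT₁ - hTU₁ - hU₁
  · linear_combination (norm := ring_nf)
      -2 * t * (U A (l - 1)).eval (1 - 2 * t) * hT₂ + t * hTU₂ + t * hU₂
  · linear_combination (norm := ring_nf)
      -2 * (t - 1) * (U A (l - 1)).eval (1 - 2 * t) * hT₂ + (t - 1) * hTU₂ + (t - 1) * hU₂

theorem lie_onsagerG_onsagerG (t : A) (l m : ℤ) : ⁅onsagerG K t l, onsagerG K t m⁆ = 0 := by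
  rw [onsagerG, onsagerG, Sl2X.ofCoords_lie_ofCoords]
  convert smul_zero (2 : K)
  convert Sl2X.ofCoords_zero using 2 <;> ring

end Onsager

section ThreePointLoopAlgebra
open Polynomial Polynomial.Chebyshev
variable {K : Type*} [Field K]

lemma evU_eq_eval (n : ℤ) : evU K n = (U (Arat K) n).eval (1 - 2 * tA K) :=
  aeval_U _ n

lemma onsagerA_tA (m : ℤ) :
    onsagerA K (tA K) m =
      -(evU K (m - 2) ⊗ₜ[K] Sl2X.Xv K) + (tA K * evU K (m - 1)) ⊗ₜ[K] Sl2X.Yv K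
        + ((tA K - 1) * evU K (m - 1)) ⊗ₜ[K] Sl2X.Zv K := by
  simp only [onsagerA, Sl2X.ofCoords, evU_eq_eval, neg_tmul]

lemma onsagerA_tA_one_sub (m : ℤ) :
    onsagerA K (tA K) (1 - m) =
      evU K (m - 1) ⊗ₜ[K] Sl2X.Xv K - (tA K * evU K (m - 2)) ⊗ₜ[K] Sl2X.Yv K
        - ((tA K - 1) * evU K (m - 2)) ⊗ₜ[K] Sl2X.Zv K := by
  rw [onsagerA_tA, show 1 - m - 2 = -m - 1 by ring, show 1 - m - 1 = -m by ring]
  simp only [evU_eq_eval, U_neg_sub_one, U_neg, eval_neg, mul_neg, neg_tmul, neg_neg]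
  abel

lemma onsagerG_tA (m : ℤ) :
    onsagerG K (tA K) m =
      -(evU K (m - 1) ⊗ₜ[K] Sl2X.Xv K) - (tA K * evU K (m - 1)) ⊗ₜ[K] Sl2X.Yv K
        + ((tA K - 1) * evU K (m - 1)) ⊗ₜ[K] Sl2X.Zv K := by
  simp only [onsagerG, Sl2X.ofCoords, evU_eq_eval, neg_tmul, sub_eq_add_neg]

end ThreePointLoopAlgebra

theorem stmt19_general (K : Type*) [Field K]
    (ah gh : ℤ → TPL K)
    (hah : ∀ m : ℤ, 1 ≤ m → ah m =
      -(evU K (m-2) ⊗ₜ[K] Sl2X.Xv K)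
        + (tA K * evU K (m-1)) ⊗ₜ[K] Sl2X.Yv K
        + ((tA K - 1) * evU K (m-1)) ⊗ₜ[K] Sl2X.Zv K)
    (hah' : ∀ m : ℤ, 1 ≤ m → ah (1 - m) =
      evU K (m-1) ⊗ₜ[K] Sl2X.Xv K
        - (tA K * evU K (m-2)) ⊗ₜ[K] Sl2X.Yv K
        - ((tA K - 1) * evU K (m-2)) ⊗ₜ[K] Sl2X.Zv K)
    (hgh : ∀ m : ℤ, 1 ≤ m → gh m =
      -(evU K (m-1) ⊗ₜ[K] Sl2X.Xv K)
        - (tA K * evU K (m-1)) ⊗ₜ[K] Sl2X.Yv K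
        + ((tA K - 1) * evU K (m-1)) ⊗ₜ[K] Sl2X.Zv K) :
    (∀ l m : ℤ, m < l → ⁅ah l, ah m⁆ = (2:K) • gh (l - m)) ∧
    (∀ l m : ℤ, 1 ≤ l → ⁅gh l, ah m⁆ = ah (m + l) - ah (m - l)) ∧
    (∀ l m : ℤ, 1 ≤ l → 1 ≤ m → ⁅gh l, gh m⁆ = 0) := by
  have hA : ah = onsagerA K (tA K) := by
    funext n
    rcases le_or_gt 1 n with hn | hn
    · rw [hah n hn, onsagerA_tA]
    · obtain ⟨m, hm, rfl⟩ : ∃ m, 1 ≤ m ∧ n = 1 - m := ⟨1 - n, by omega, by ring⟩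
      rw [hah' m hm, onsagerA_tA_one_sub]
  have hG (m : ℤ) (hm : 1 ≤ m) : gh m = onsagerG K (tA K) m := by
    rw [hgh m hm, onsagerG_tA]
  subst hA
  refine ⟨fun l m hml => ?_, fun l m hl => ?_, fun l m hl hm => ?_⟩
  · rw [hG (l - m) (by omega), lie_onsagerA_onsagerA]
  · rw [hG l hl, lie_onsagerG_onsagerA]
  · rw [hG l hl, hG m hm, lie_onsagerG_onsagerG]

/-- in the three-point loop algebra, the elements
`â_m = -X⊗U_{m-2}(1-2T) + Y⊗T·U_{m-1}(1-2T) + Z⊗(T-1)·U_{m-1}(1-2T)`,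
`â_{1-m} = X⊗U_{m-1}(1-2T) - Y⊗T·U_{m-2}(1-2T) - Z⊗(T-1)·U_{m-2}(1-2T)` and
`ĝ_m = -X⊗U_{m-1}(1-2T) - Y⊗T·U_{m-1}(1-2T) + Z⊗(T-1)·U_{m-1}(1-2T)` (`m ≥ 1`)
satisfy the Onsager relations. -/
theorem stmt19 (K : Type*) [Field K] [CharZero K]
    (ah gh : ℤ → TPL K)
    (hah : ∀ m : ℤ, 1 ≤ m → ah m =
      -(evU K (m-2) ⊗ₜ[K] Sl2X.Xv K)
        + (tA K * evU K (m-1)) ⊗ₜ[K] Sl2X.Yv K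
        + ((tA K - 1) * evU K (m-1)) ⊗ₜ[K] Sl2X.Zv K)
    (hah' : ∀ m : ℤ, 1 ≤ m → ah (1 - m) =
      evU K (m-1) ⊗ₜ[K] Sl2X.Xv K
        - (tA K * evU K (m-2)) ⊗ₜ[K] Sl2X.Yv K
        - ((tA K - 1) * evU K (m-2)) ⊗ₜ[K] Sl2X.Zv K)
    (hgh : ∀ m : ℤ, 1 ≤ m → gh m =
      -(evU K (m-1) ⊗ₜ[K] Sl2X.Xv K)
        - (tA K * evU K (m-1)) ⊗ₜ[K] Sl2X.Yv K
        + ((tA K - 1) * evU K (m-1)) ⊗ₜ[K] Sl2X.Zv K) :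
    (∀ l m : ℤ, m < l → ⁅ah l, ah m⁆ = (2:K) • gh (l - m)) ∧
    (∀ l m : ℤ, 1 ≤ l → ⁅gh l, ah m⁆ = ah (m + l) - ah (m - l)) ∧
    (∀ l m : ℤ, 1 ≤ l → 1 ≤ m → ⁅gh l, gh m⁆ = 0) :=
  stmt19_general K ah gh hah hah' hgh
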